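/- Let G be an infinite torsion subgroup of 𝕋 (every element of G has finite order). Then there exist an arithmetic sequence (a_n) and an arithmetic-type sequence (e_n) associated with (a_n) such that the ratio sequence (e_{n+1}/e_n) is bounded and G = t_{(e_n)}(𝕋). -/

import Mathlib

open Filter Topology

noncomputable section

/-- The circle group `𝕋 = ℝ/ℤ`. -/
abbrev Circle1 : Type := AddCircle (1 : ℝ)

/-- An arithmetic sequence `(a_n)_{n ≥ 1}`, with the convention `a 0 = 1`:
a strictly increasing sequence of positive integers with `1 < a 1` and `a n ∣ a (n+1)`. -/
def IsArithSeq (a : ℕ → ℕ) : Prop :=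
  a 0 = 1 ∧ StrictMono a ∧ ∀ n, a n ∣ a (n + 1)

/-- The ratio sequence: `q n = a n / a (n-1)` (so `q 1 = a 1`). -/
def ratioSeq (a : ℕ → ℕ) (n : ℕ) : ℕ := a n / a (n - 1)

/-- The subgroup of `𝕋` characterized by a sequence of integers `(u n)`. -/
def charSub (u : ℕ → ℕ) : Set Circle1 :=
  {x : Circle1 | Tendsto (fun n => (u n) • x) atTop (nhds 0)}

/-- The set `{r·a_{k-1} : k ≥ 1, 1 ≤ r ≤ q_k - 1}` whose increasing enumeration is `(d_n)`. -/
def DSet (a : ℕ → ℕ) : Set ℕ :=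
  {m | ∃ k, 1 ≤ k ∧ ∃ r, 1 ≤ r ∧ r ≤ ratioSeq a k - 1 ∧ m = r * a (k - 1)}

/-- `(d_n)` is the strictly increasing enumeration of `DSet a`. -/
def IsDSeq (a d : ℕ → ℕ) : Prop := StrictMono d ∧ Set.range d = DSet a

/-- An arithmetic-type sequence associated with the arithmetic sequence `(a_n)`:
a strictly increasing sequence of positive integers whose set of values contains all the
values `a k` (for `k ≥ 1`) and is contained in `DSet a`. -/
def IsArithTypeSeq (a e : ℕ → ℕ) : Prop :=
  StrictMono e ∧ (∀ k, 1 ≤ k → a k ∈ Set.range e) ∧ Set.range e ⊆ DSet a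

/-- `(c_n)_{n ≥ 1}` is the canonical representation of `x ∈ 𝕋` w.r.t. the arithmetic
sequence `(a_n)`: `0 ≤ c n ≤ q n - 1` for all `n ≥ 1`, `c n < q n - 1` infinitely often,
and `x = Σ_{n ≥ 1} c n / a n` in `𝕋`. -/
def IsCanonicalRep (a c : ℕ → ℕ) (x : Circle1) : Prop :=
  (∀ n, 1 ≤ n → c n ≤ ratioSeq a n - 1) ∧
  {n | 1 ≤ n ∧ c n < ratioSeq a n - 1}.Infinite ∧
  x = ((∑' n : ℕ, (c (n + 1) : ℝ) / (a (n + 1) : ℝ) : ℝ) : Circle1)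

/-- The support of a digit sequence: `supp(x) = {n ≥ 1 : c n ≠ 0}`. -/
def suppOf (c : ℕ → ℕ) : Set ℕ := {n | 1 ≤ n ∧ c n ≠ 0}

/-!
The `n`-torsion of `𝕋` is the cyclic group generated by `1 / n`, so a torsion subgroup `G` is the
union of the groups `⟨1 / n⟩` with `1 / n ∈ G`. These `n` are closed under `lcm` and, `G` being
infinite, unbounded, so they contain a cofinal divisibility chain `a`, and
`G = {x | ∃ K, a K • x = 0}`. Consecutive terms of the enumeration `d` of `DSet a` differ by a
factor at most `2`, and `d n • x → 0` forces `a K • x = 0` for some `K`: otherwise, once all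
`d n • x` are within `1 / 4` of `0`, multiplying `a k • x` by `r ≤ q (k + 1)` (`q = ratioSeq a`)
never wraps around the circle, so `‖a (k + 1) • x‖ = q (k + 1) * ‖a k • x‖ ≥ 2 * ‖a k • x‖` would
grow without bound.
-/

lemma mem_zmultiples_one_div_iff {n : ℕ} (hn : 0 < n) {u : Circle1} :
    u ∈ AddSubgroup.zmultiples ((1 / n : ℝ) : Circle1) ↔ n • u = 0 := by
  constructor
  · rintro ⟨k, rfl⟩
    have h := addOrderOf_nsmul_eq_zero ((1 / n : ℝ) : Circle1)
    rw [AddCircle.addOrderOf_period_div hn] at h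
    rw [smul_comm, h, smul_zero]
  · intro h
    obtain ⟨m, -, rfl⟩ := (AddCircle.nsmul_eq_zero_iff hn).mp h
    exact ⟨m, by simp only [natCast_zsmul, AddCircle.natCast_div_mul_eq_nsmul]⟩

lemma zmultiples_eq_zmultiples_one_div {u : Circle1} (hu : IsOfFinAddOrder u) :
    AddSubgroup.zmultiples u = AddSubgroup.zmultiples ((1 / addOrderOf u : ℝ) : Circle1) := by
  have hn := hu.addOrderOf_pos
  have hord := AddCircle.addOrderOf_period_div (p := (1 : ℝ)) hn
  have : Finite (AddSubgroup.zmultiples ((1 / addOrderOf u : ℝ) : Circle1)) :=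
    (addOrderOf_pos_iff.mp (hord.symm ▸ hn)).finite_zmultiples
  refine AddSubgroup.eq_of_le_of_card_ge ?_ ?_
  · exact AddSubgroup.zmultiples_le.mpr
      ((mem_zmultiples_one_div_iff hn).mpr (addOrderOf_nsmul_eq_zero u))
  · rw [Nat.card_zmultiples, Nat.card_zmultiples, hord]

lemma one_div_lcm_mem {G : AddSubgroup Circle1} {m n : ℕ} (hm : 0 < m) (hn : 0 < n)
    (hmG : ((1 / m : ℝ) : Circle1) ∈ G) (hnG : ((1 / n : ℝ) : Circle1) ∈ G) :
    ((1 / Nat.lcm m n : ℝ) : Circle1) ∈ G := by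
  -- Bézout: `1 / lcm m n = gcd m n / (m n)` and `gcd m n = m A + n B`
  have key : (1 / Nat.lcm m n : ℝ) = Nat.gcdB m n * (1 / m) + Nat.gcdA m n * (1 / n) := by
    have hg : (Nat.gcd m n : ℝ) * Nat.lcm m n = m * n := by exact_mod_cast Nat.gcd_mul_lcm m n
    have hab : (Nat.gcd m n : ℝ) = m * Nat.gcdA m n + n * Nat.gcdB m n := by
      exact_mod_cast Nat.gcd_eq_gcd_ab m n
    have hl : (Nat.lcm m n : ℝ) ≠ 0 := by positivity
    field_simp
    linear_combination (Nat.lcm m n : ℝ) * hab - hg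
  rw [key, AddCircle.coe_add, ← zsmul_eq_mul, ← zsmul_eq_mul, AddCircle.coe_zsmul,
    AddCircle.coe_zsmul]
  exact add_mem (zsmul_mem hmG _) (zsmul_mem hnG _)

lemma exists_lt_addOrderOf {G : AddSubgroup Circle1} (hGinf : (G : Set Circle1).Infinite)
    (hGtor : ∀ x ∈ G, IsOfFinAddOrder x) (m : ℕ) : ∃ x ∈ G, m < addOrderOf x := by
  obtain ⟨x, hxG, hx⟩ :=
    (hGinf.sdiff (AddCircle.finite_torsion (p := 1) m.factorial_pos)).nonempty
  refine ⟨x, hxG, not_le.mp fun hle => hx ?_⟩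
  exact addOrderOf_dvd_iff_nsmul_eq_zero.mp (Nat.dvd_factorial (hGtor x hxG).addOrderOf_pos hle)

lemma norm_nsmul_eq_mul_norm {y : Circle1} {n : ℕ} (h : n * ‖y‖ ≤ 1 / 2) :
    ‖n • y‖ = n * ‖y‖ := by
  obtain ⟨t, rfl, ht⟩ : ∃ t : ℝ, (t : Circle1) = y ∧ ‖y‖ = |t| := by
    obtain ⟨s, rfl⟩ := QuotientAddGroup.mk_surjective y
    refine ⟨s - round s, ?_, UnitAddCircle.norm_eq⟩
    rw [AddCircle.coe_sub, sub_eq_self, AddCircle.coe_eq_zero_iff]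
    exact ⟨round s, by simp⟩
  have hnt : |(n : ℝ) * t| = n * ‖(t : Circle1)‖ := by rw [abs_mul, Nat.abs_cast, ht]
  rw [← AddCircle.coe_nsmul, nsmul_eq_mul, ← hnt]
  exact (AddCircle.norm_coe_eq_abs_iff (p := 1) one_ne_zero).mpr (by rwa [hnt, abs_one])

lemma norm_nsmul_eq_mul_norm_of_forall_lt {y : Circle1} {Q : ℕ}
    (h : ∀ r, 1 ≤ r → r ≤ Q → ‖r • y‖ < 1 / 4) : ‖Q • y‖ = Q * ‖y‖ := by
  have hsmall : ∀ r ≤ Q, (r : ℝ) * ‖y‖ < 1 / 4 := by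
    intro r hr
    induction r with
    | zero => norm_num
    | succ r ih =>
      have hy : ‖y‖ < 1 / 4 := by simpa using h 1 le_rfl (by omega)
      have hlt : ((r + 1 : ℕ) : ℝ) * ‖y‖ ≤ 1 / 2 := by
        push_cast
        linarith [ih (by omega)]
      rw [← norm_nsmul_eq_mul_norm hlt]
      exact h _ (by omega) hr
  exact norm_nsmul_eq_mul_norm (by linarith [hsmall Q le_rfl])

theorem exists_isArithSeq_cofinal {S : Set ℕ} (h0 : 0 ∉ S) (h1 : 1 ∈ S)
    (hlcm : ∀ m ∈ S, ∀ n ∈ S, Nat.lcm m n ∈ S) (hunb : ∀ m, ∃ s ∈ S, m < s) :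
    ∃ a, IsArithSeq a ∧ (∀ n, a n ∈ S) ∧ ∀ s ∈ S, ∃ K, s ∣ a K := by
  classical
  choose next hnextS hlt using hunb
  -- `c n` makes `n` itself (when in `S`) divide `a (n + 1)`, which gives cofinality
  let c : ℕ → ℕ := fun n => if n ∈ S then n else 1
  have hcS : ∀ n, c n ∈ S := fun n => by by_cases h : n ∈ S <;> simp [c, h, h1]
  let a : ℕ → ℕ := fun n => Nat.rec 1 (fun n an => Nat.lcm (Nat.lcm an (c n)) (next an)) n
  have haS : ∀ n, a n ∈ S := fun n => by
    induction n with
    | zero => exact h1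
    | succ n ih => exact hlcm _ (hlcm _ ih _ (hcS n)) _ (hnextS _)
  have hpos : ∀ n, 0 < a n := fun n => Nat.pos_of_ne_zero fun h => h0 (h ▸ haS n)
  have hdvd : ∀ n, a n ∣ a (n + 1) := fun n => (Nat.dvd_lcm_left _ _).trans (Nat.dvd_lcm_left _ _)
  have hstep : ∀ n, a n < a (n + 1) := fun n =>
    (hlt (a n)).trans_le (Nat.le_of_dvd (hpos (n + 1)) (Nat.dvd_lcm_right _ _))
  refine ⟨a, ⟨rfl, strictMono_nat_of_lt_succ hstep, hdvd⟩, haS, fun s hs => ⟨s + 1, ?_⟩⟩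
  have hcs : c s ∣ a (s + 1) := (Nat.dvd_lcm_right _ _).trans (Nat.dvd_lcm_left _ _)
  rwa [show c s = s from if_pos hs] at hcs

theorem exists_isArithSeq_eq_setOf_nsmul_eq_zero {G : AddSubgroup Circle1}
    (hGinf : (G : Set Circle1).Infinite) (hGtor : ∀ x ∈ G, IsOfFinAddOrder x) :
    ∃ a, IsArithSeq a ∧ (G : Set Circle1) = {x | ∃ K, a K • x = 0} := by
  have hord : ∀ x ∈ G, ((1 / addOrderOf x : ℝ) : Circle1) ∈ G := fun x hx =>
    AddSubgroup.zmultiples_le.mp <|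
      (zmultiples_eq_zmultiples_one_div (hGtor x hx)).ge.trans (AddSubgroup.zmultiples_le.mpr hx)
  obtain ⟨a, ha, haS, hcofinal⟩ :=
    exists_isArithSeq_cofinal (S := {n | 0 < n ∧ ((1 / n : ℝ) : Circle1) ∈ G}) (by simp)
      ⟨one_pos, by simp [AddCircle.coe_period]⟩
      (fun m hm n hn => ⟨Nat.lcm_pos hm.1 hn.1, one_div_lcm_mem hm.1 hn.1 hm.2 hn.2⟩)
      (fun m => let ⟨x, hx, hlt⟩ := exists_lt_addOrderOf hGinf hGtor m
        ⟨_, ⟨(hGtor x hx).addOrderOf_pos, hord x hx⟩, hlt⟩)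
  refine ⟨a, ha, Set.ext fun x => ⟨fun hx => ?_, fun ⟨K, hK⟩ => ?_⟩⟩
  · obtain ⟨K, hK⟩ := hcofinal _ ⟨(hGtor x hx).addOrderOf_pos, hord x hx⟩
    exact ⟨K, addOrderOf_dvd_iff_nsmul_eq_zero.mp hK⟩
  · exact AddSubgroup.zmultiples_le.mpr (haS K).2
      ((mem_zmultiples_one_div_iff (haS K).1).mpr hK)

lemma mem_DSet_iff {a : ℕ → ℕ} {m : ℕ} :
    m ∈ DSet a ↔ ∃ k r, 0 < r ∧ r < ratioSeq a (k + 1) ∧ m = r * a k := by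
  constructor
  · rintro ⟨k, hk, r, hr, hrq, rfl⟩
    obtain ⟨k, rfl⟩ := Nat.exists_eq_add_of_le' hk
    exact ⟨k, r, hr, by omega, rfl⟩
  · rintro ⟨k, r, hr, hrq, rfl⟩
    exact ⟨k + 1, by omega, r, hr, by omega, rfl⟩

namespace IsArithSeq

variable {a : ℕ → ℕ}

lemma pos (ha : IsArithSeq a) (n : ℕ) : 0 < a n := by
  have h := ha.2.1.monotone (Nat.zero_le n)
  rw [ha.1] at h
  omega

lemma dvd_of_le (ha : IsArithSeq a) {i j : ℕ} (hij : i ≤ j) : a i ∣ a j :=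
  Nat.rel_of_forall_rel_succ_of_le_of_le (· ∣ ·) (fun n _ => ha.2.2 n) (Nat.zero_le i) hij

lemma ratioSeq_mul (ha : IsArithSeq a) (k : ℕ) : ratioSeq a (k + 1) * a k = a (k + 1) := by
  rw [ratioSeq, Nat.add_sub_cancel]
  exact Nat.div_mul_cancel (ha.2.2 k)

lemma two_le_ratioSeq (ha : IsArithSeq a) (k : ℕ) : 2 ≤ ratioSeq a (k + 1) := by
  have hmul := ha.ratioSeq_mul k
  have hlt := ha.2.1 (Nat.lt_add_one k)
  have hpos := ha.pos k
  by_contra! h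
  interval_cases ratioSeq a (k + 1) <;> omega

lemma mem_DSet (ha : IsArithSeq a) (k : ℕ) : a k ∈ DSet a :=
  mem_DSet_iff.mpr ⟨k, 1, one_pos, ha.two_le_ratioSeq k, (one_mul _).symm⟩

lemma DSet_infinite (ha : IsArithSeq a) : (DSet a).Infinite :=
  Set.infinite_of_injective_forall_mem ha.2.1.injective ha.mem_DSet

lemma dvd_of_mem_DSet (ha : IsArithSeq a) {m K : ℕ} (hm : m ∈ DSet a) (hK : a K ≤ m) :
    a K ∣ m := by
  obtain ⟨k, r, -, hrq, rfl⟩ := mem_DSet_iff.mp hm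
  have hKk : K ≤ k := by
    by_contra! h
    have hlt : r * a k < a (k + 1) :=
      ha.ratioSeq_mul k ▸ Nat.mul_lt_mul_of_pos_right hrq (ha.pos k)
    exact (ha.2.1.monotone h).not_gt (hK.trans_lt hlt)
  exact (ha.dvd_of_le hKk).trans (dvd_mul_left _ _)

lemma exists_mem_DSet_lt_le_two_mul (ha : IsArithSeq a) {m : ℕ} (hm : m ∈ DSet a) :
    ∃ m' ∈ DSet a, m < m' ∧ m' ≤ 2 * m := by
  obtain ⟨k, r, hr, hrq, rfl⟩ := mem_DSet_iff.mp hm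
  have hmem : (r + 1) * a k ∈ DSet a := by
    rcases (show r + 1 ≤ ratioSeq a (k + 1) from hrq).lt_or_eq with h | h
    · exact mem_DSet_iff.mpr ⟨k, r + 1, r.succ_pos, h, rfl⟩
    · rw [h, ha.ratioSeq_mul]
      exact ha.mem_DSet (k + 1)
  have hpos := ha.pos k
  exact ⟨_, hmem, by nlinarith, by nlinarith⟩

theorem exists_isDSeq (ha : IsArithSeq a) : ∃ d, IsDSeq a d :=
  ⟨Nat.nth (· ∈ DSet a), Nat.nth_strictMono ha.DSet_infinite,
    Nat.range_nth_of_infinite ha.DSet_infinite⟩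

end IsArithSeq

namespace IsDSeq

variable {a d : ℕ → ℕ}

lemma isArithTypeSeq (hd : IsDSeq a d) (ha : IsArithSeq a) : IsArithTypeSeq a d :=
  ⟨hd.1, fun k _ => hd.2 ▸ ha.mem_DSet k, hd.2.le⟩

lemma succ_le_two_mul (hd : IsDSeq a d) (ha : IsArithSeq a) (n : ℕ) : d (n + 1) ≤ 2 * d n := by
  obtain ⟨m', hm', hlt, hle⟩ := ha.exists_mem_DSet_lt_le_two_mul (hd.2 ▸ Set.mem_range_self n)
  obtain ⟨j, rfl⟩ := hd.2.symm ▸ hm'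
  exact (hd.1.monotone (hd.1.lt_iff_lt.mp hlt)).trans hle

lemma mem_charSub_of_nsmul_eq_zero (hd : IsDSeq a d) (ha : IsArithSeq a) {x : Circle1} {K : ℕ}
    (hK : a K • x = 0) : x ∈ charSub d := by
  have hev : ∀ᶠ n in atTop, d n • x = 0 := by
    filter_upwards [hd.1.tendsto_atTop.eventually_ge_atTop (a K)] with n hn
    obtain ⟨c, hc⟩ := ha.dvd_of_mem_DSet (hd.2 ▸ Set.mem_range_self n) hn
    rw [hc, mul_comm, mul_smul, hK, smul_zero]
  exact tendsto_const_nhds.congr' (hev.mono fun n h => h.symm)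

lemma exists_nsmul_eq_zero_of_mem_charSub (hd : IsDSeq a d) (ha : IsArithSeq a) {x : Circle1}
    (hx : x ∈ charSub d) : ∃ K, a K • x = 0 := by
  obtain ⟨N, hN⟩ :=
    eventually_atTop.mp (NormedAddGroup.tendsto_nhds_zero.mp hx (1 / 4) (by norm_num))
  have hsmall : ∀ m ∈ DSet a, d N ≤ m → ‖m • x‖ < 1 / 4 := by
    intro m hm hle
    obtain ⟨j, rfl⟩ := hd.2.symm ▸ hm
    exact hN j (hd.1.le_iff_le.mp hle)
  -- beyond `d N`, all of `r * a k` for `1 ≤ r ≤ q (k + 1)` lie in `DSet a`, so `‖a k • x‖` doubles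
  have hdouble : ∀ k, d N ≤ k → 2 * ‖a k • x‖ ≤ ‖a (k + 1) • x‖ := by
    intro k hk
    have hak : d N ≤ a k := hk.trans (ha.2.1.id_le k)
    have hmul : ∀ r, 1 ≤ r → r ≤ ratioSeq a (k + 1) → ‖r • a k • x‖ < 1 / 4 := by
      intro r hr hrq
      rw [← mul_smul]
      refine hsmall _ ?_ (hak.trans (Nat.le_mul_of_pos_left _ hr))
      rcases hrq.lt_or_eq with h | rfl
      · exact mem_DSet_iff.mpr ⟨k, r, hr, h, rfl⟩
      · rw [ha.ratioSeq_mul]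
        exact ha.mem_DSet _
    rw [← ha.ratioSeq_mul k, mul_smul, norm_nsmul_eq_mul_norm_of_forall_lt hmul]
    gcongr
    exact_mod_cast ha.two_le_ratioSeq k
  by_contra! hne
  have hpos : 0 < ‖a (d N) • x‖ := norm_pos_iff.mpr (hne _)
  have hgrowth : ∀ j, 2 ^ j * ‖a (d N) • x‖ ≤ ‖a (d N + j) • x‖ := by
    intro j
    induction j with
    | zero => simp
    | succ j ih =>
      calc 2 ^ (j + 1) * ‖a (d N) • x‖ = 2 * (2 ^ j * ‖a (d N) • x‖) := by ring
        _ ≤ 2 * ‖a (d N + j) • x‖ := by gcongr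
        _ ≤ ‖a (d N + j + 1) • x‖ := hdouble _ (Nat.le_add_right _ _)
  obtain ⟨j, hj⟩ := pow_unbounded_of_one_lt (1 / 4 / ‖a (d N) • x‖) one_lt_two
  have hlt := hsmall _ (ha.mem_DSet (d N + j)) ((Nat.le_add_right _ _).trans (ha.2.1.id_le _))
  rw [div_lt_iff₀ hpos] at hj
  linarith [hgrowth j]

lemma charSub_eq (hd : IsDSeq a d) (ha : IsArithSeq a) :
    charSub d = {x | ∃ K, a K • x = 0} :=
  Set.ext fun _ => ⟨hd.exists_nsmul_eq_zero_of_mem_charSub ha,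
    fun ⟨_, hK⟩ => hd.mem_charSub_of_nsmul_eq_zero ha hK⟩

end IsDSeq

/-- every infinite torsion subgroup of `𝕋` is characterized by an
arithmetic-type sequence with bounded ratio. -/
theorem torsion_subgroup_characterized (G : AddSubgroup Circle1)
    (hGinf : (G : Set Circle1).Infinite) (hGtor : ∀ x ∈ G, IsOfFinAddOrder x) :
    ∃ (a e : ℕ → ℕ), IsArithSeq a ∧ IsArithTypeSeq a e ∧
      (∃ C : ℕ, ∀ n, e (n + 1) ≤ C * e n) ∧ (G : Set Circle1) = charSub e := by
  obtain ⟨a, ha, hG⟩ := exists_isArithSeq_eq_setOf_nsmul_eq_zero hGinf hGtor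
  obtain ⟨d, hd⟩ := ha.exists_isDSeq
  exact ⟨a, d, ha, hd.isArithTypeSeq ha, ⟨2, hd.succ_le_two_mul ha⟩,
    hG.trans (hd.charSub_eq ha).symm⟩
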